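/- Denoting by κ_P and c_P the kurtosis and uniform kurtosis of a probability measure P on the real line (with positive variance and finite fourth moment), one has sup_P (c_P − κ_P) = 2, where the supremum is taken over all such probability measures on ℝ. In particular, for the Bernoulli distribution with parameter p ∈ (0,1), κ = p⁻¹ − 2 + p/(1−p) and c − κ ≥ 2 − p/(1−p), so the value 2 is approached as p → 0, while c_P − κ_P ≤ 2 always holds. -/

import Mathlib

open MeasureTheory ProbabilityTheory

noncomputable def meanOf (μ : Measure ℝ) : ℝ := ∫ y, y ∂μ

noncomputable def varOf (μ : Measure ℝ) : ℝ := ∫ y, (y - meanOf μ) ^ 2 ∂μ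

/-- The (centered) kurtosis `κ_P = E[(Y - m)⁴]/v²` of a probability measure on `ℝ`. -/
noncomputable def kurtOf (μ : Measure ℝ) : ℝ :=
  (∫ y, (y - meanOf μ) ^ 4 ∂μ) / (varOf μ) ^ 2

/-- The uniform kurtosis `c_P = sup_θ E[(Y - θ)⁴]/(E[(Y - θ)²])²` of a probability measure
on `ℝ`. -/
noncomputable def ukurtOf (μ : Measure ℝ) : ℝ :=
  ⨆ θ : ℝ, (∫ y, (y - θ) ^ 4 ∂μ) / (∫ y, (y - θ) ^ 2 ∂μ) ^ 2

noncomputable def bernMeasure (p : ℝ) : Measure ℝ :=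
  ENNReal.ofReal p • Measure.dirac (1 : ℝ) + ENNReal.ofReal (1 - p) • Measure.dirac (0 : ℝ)

/-!
Write `X = Y - m`, `v = E X²`, `μ₃ = E X³`, `μ₄ = E X⁴` and `s = m - θ`. Then
`E (Y - θ)² = v + s²` and `E (Y - θ)⁴ = μ₄ + 4 μ₃ s + 6 v s² + s⁴`. Pearson's inequality
`μ₃² ≤ v (μ₄ - v²)`, which is `E (v (X² - v) - μ₃ X)² ≥ 0`, makes
`v ((μ₄ + 2 v²)(v + s²)² - v² E (Y - θ)⁴)` a sum of nonnegative terms, so `c_P ≤ κ_P + 2`.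
For the Bernoulli law with parameter `p` the ratio at `θ = 0` is already `p⁻¹`, while
`κ = p⁻¹ - 2 + p / (1 - p)`; letting `p → 0` shows that `2` is the least upper bound.
-/

open Filter Topology

lemma memLp_four_of_integrable_pow_four {μ : Measure ℝ} (h4 : Integrable (fun y => y ^ 4) μ) :
    MemLp (fun y => y) 4 μ := by
  refine (integrable_norm_rpow_iff aestronglyMeasurable_id (by norm_num) (by norm_num)).1 ?_
  simpa using h4.norm

section Moments

variable {μ : Measure ℝ} [IsProbabilityMeasure μ]

lemma integrable_sub_pow (h4 : Integrable (fun y => y ^ 4) μ) (c : ℝ) {k : ℕ} (hk : k ≤ 4) :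
    Integrable (fun y => (y - c) ^ k) μ := by
  have h : MemLp (fun y => y - c) k μ :=
    ((memLp_four_of_integrable_pow_four h4).sub (memLp_const c)).mono_exponent
      (by exact_mod_cast hk)
  refine (integrable_norm_iff (by fun_prop)).1 ?_
  simpa [norm_pow] using h.integrable_norm_pow'

lemma integral_quartic_sub (h4 : Integrable (fun y => y ^ 4) μ) (c a₄ a₃ a₂ a₁ a₀ : ℝ) :
    ∫ y, (a₄ * (y - c) ^ 4 + a₃ * (y - c) ^ 3 + a₂ * (y - c) ^ 2 + a₁ * (y - c) + a₀) ∂μ =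
      a₄ * ∫ y, (y - c) ^ 4 ∂μ + a₃ * ∫ y, (y - c) ^ 3 ∂μ + a₂ * ∫ y, (y - c) ^ 2 ∂μ +
        a₁ * ∫ y, (y - c) ∂μ + a₀ := by
  have i4 := integrable_sub_pow h4 c le_rfl
  have i3 := integrable_sub_pow h4 c (k := 3) (by norm_num)
  have i2 := integrable_sub_pow h4 c (k := 2) (by norm_num)
  have i1 : Integrable (fun y => y - c) μ := by
    simpa using integrable_sub_pow h4 c (k := 1) (by norm_num)
  rw [integral_add (by fun_prop) (by fun_prop), integral_add (by fun_prop) (by fun_prop),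
    integral_add (by fun_prop) (by fun_prop), integral_add (by fun_prop) (by fun_prop)]
  simp [integral_const_mul]

lemma integral_sub_meanOf (h1 : Integrable (fun y => y) μ) : ∫ y, (y - meanOf μ) ∂μ = 0 := by
  rw [integral_sub h1 (integrable_const _), integral_const]
  simp [meanOf]

lemma integral_quartic_sub_meanOf (h4 : Integrable (fun y => y ^ 4) μ) (a₄ a₃ a₂ a₁ a₀ : ℝ) :
    ∫ y, (a₄ * (y - meanOf μ) ^ 4 + a₃ * (y - meanOf μ) ^ 3 + a₂ * (y - meanOf μ) ^ 2 +
        a₁ * (y - meanOf μ) + a₀) ∂μ =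
      a₄ * ∫ y, (y - meanOf μ) ^ 4 ∂μ + a₃ * ∫ y, (y - meanOf μ) ^ 3 ∂μ + a₂ * varOf μ + a₀ := by
  rw [integral_quartic_sub h4,
    integral_sub_meanOf ((memLp_four_of_integrable_pow_four h4).integrable (by norm_num)), varOf]
  ring

lemma integral_sub_sq_eq (h4 : Integrable (fun y => y ^ 4) μ) (θ : ℝ) :
    ∫ y, (y - θ) ^ 2 ∂μ = varOf μ + (meanOf μ - θ) ^ 2 := by
  set s := meanOf μ - θ
  have expand : (fun y => (y - θ) ^ 2) = fun y =>
      0 * (y - meanOf μ) ^ 4 + 0 * (y - meanOf μ) ^ 3 + 1 * (y - meanOf μ) ^ 2 +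
        2 * s * (y - meanOf μ) + s ^ 2 := by
    ext y; ring
  rw [expand, integral_quartic_sub_meanOf h4]
  ring

lemma integral_sub_pow_four_eq (h4 : Integrable (fun y => y ^ 4) μ) (θ : ℝ) :
    ∫ y, (y - θ) ^ 4 ∂μ = ∫ y, (y - meanOf μ) ^ 4 ∂μ +
      4 * (∫ y, (y - meanOf μ) ^ 3 ∂μ) * (meanOf μ - θ) + 6 * varOf μ * (meanOf μ - θ) ^ 2 +
        (meanOf μ - θ) ^ 4 := by
  set s := meanOf μ - θ
  have expand : (fun y => (y - θ) ^ 4) = fun y =>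
      1 * (y - meanOf μ) ^ 4 + 4 * s * (y - meanOf μ) ^ 3 + 6 * s ^ 2 * (y - meanOf μ) ^ 2 +
        4 * s ^ 3 * (y - meanOf μ) + s ^ 4 := by
    ext y; ring
  rw [expand, integral_quartic_sub_meanOf h4]
  ring

/-- Pearson's inequality `κ ≥ 1 + skewness²`. -/
lemma sq_integral_sub_meanOf_pow_three_le (h4 : Integrable (fun y => y ^ 4) μ)
    (hv : 0 < varOf μ) :
    (∫ y, (y - meanOf μ) ^ 3 ∂μ) ^ 2 ≤
      varOf μ * (∫ y, (y - meanOf μ) ^ 4 ∂μ - varOf μ ^ 2) := by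
  set v := varOf μ
  set μ₃ := ∫ y, (y - meanOf μ) ^ 3 ∂μ
  have expand : (fun y => (v * ((y - meanOf μ) ^ 2 - v) - μ₃ * (y - meanOf μ)) ^ 2) = fun y =>
      v ^ 2 * (y - meanOf μ) ^ 4 + (-2 * v * μ₃) * (y - meanOf μ) ^ 3 +
        (μ₃ ^ 2 - 2 * v ^ 3) * (y - meanOf μ) ^ 2 + 2 * v ^ 2 * μ₃ * (y - meanOf μ) + v ^ 4 := by
    ext y; ring
  have key : 0 ≤ ∫ y, (v * ((y - meanOf μ) ^ 2 - v) - μ₃ * (y - meanOf μ)) ^ 2 ∂μ :=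
    integral_nonneg fun y => sq_nonneg _
  rw [expand, integral_quartic_sub_meanOf h4] at key
  nlinarith

end Moments

lemma quartic_div_sq_le {v μ₃ μ₄ : ℝ} (hv : 0 < v) (hpearson : μ₃ ^ 2 ≤ v * (μ₄ - v ^ 2))
    (s : ℝ) :
    (μ₄ + 4 * μ₃ * s + 6 * v * s ^ 2 + s ^ 4) / (v + s ^ 2) ^ 2 ≤ μ₄ / v ^ 2 + 2 := by
  rw [div_add' _ _ _ (by positivity), div_le_div_iff₀ (by positivity) (by positivity),
    ← sub_nonneg, ← mul_nonneg_iff_of_pos_left hv]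
  have sos : v * ((μ₄ + 2 * v ^ 2) * (v + s ^ 2) ^ 2 -
        (μ₄ + 4 * μ₃ * s + 6 * v * s ^ 2 + s ^ 4) * v ^ 2) =
      s ^ 2 * (2 * v + s ^ 2) * (v * (μ₄ - v ^ 2) - μ₃ ^ 2) + 2 * v * (v ^ 2 - μ₃ * s) ^ 2 +
        (2 * v ^ 3 + μ₃ ^ 2) * s ^ 4 := by
    ring
  rw [sos]
  have := sub_nonneg.2 hpearson
  positivity

noncomputable def momentRatio (μ : Measure ℝ) (θ : ℝ) : ℝ :=
  (∫ y, (y - θ) ^ 4 ∂μ) / (∫ y, (y - θ) ^ 2 ∂μ) ^ 2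

lemma ukurtOf_eq_iSup_momentRatio (μ : Measure ℝ) : ukurtOf μ = ⨆ θ, momentRatio μ θ := rfl

section UpperBound

variable {μ : Measure ℝ} [IsProbabilityMeasure μ]

lemma momentRatio_le_kurtOf_add_two (h4 : Integrable (fun y => y ^ 4) μ) (hv : 0 < varOf μ)
    (θ : ℝ) : momentRatio μ θ ≤ kurtOf μ + 2 := by
  rw [momentRatio, integral_sub_pow_four_eq h4, integral_sub_sq_eq h4]
  exact quartic_div_sq_le hv (sq_integral_sub_meanOf_pow_three_le h4 hv) _

lemma ukurtOf_le_kurtOf_add_two (h4 : Integrable (fun y => y ^ 4) μ) (hv : 0 < varOf μ) :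
    ukurtOf μ ≤ kurtOf μ + 2 :=
  (ukurtOf_eq_iSup_momentRatio μ).trans_le (ciSup_le (momentRatio_le_kurtOf_add_two h4 hv))

end UpperBound

section Bernoulli

variable {p : ℝ}

lemma isProbabilityMeasure_bernMeasure (hp0 : 0 ≤ p) (hp1 : p ≤ 1) :
    IsProbabilityMeasure (bernMeasure p) := by
  constructor
  simp [bernMeasure, ← ENNReal.ofReal_add hp0 (sub_nonneg.2 hp1)]

lemma integrable_bernMeasure (f : ℝ → ℝ) : Integrable f (bernMeasure p) :=
  ((integrable_dirac (by simp)).smul_measure ENNReal.ofReal_ne_top).add_measure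
    ((integrable_dirac (by simp)).smul_measure ENNReal.ofReal_ne_top)

lemma integral_bernMeasure (hp0 : 0 ≤ p) (hp1 : p ≤ 1) (f : ℝ → ℝ) :
    ∫ y, f y ∂(bernMeasure p) = p * f 1 + (1 - p) * f 0 := by
  rw [bernMeasure, integral_add_measure
    ((integrable_dirac (by simp)).smul_measure ENNReal.ofReal_ne_top)
    ((integrable_dirac (by simp)).smul_measure ENNReal.ofReal_ne_top)]
  simp [ENNReal.toReal_ofReal hp0, ENNReal.toReal_ofReal (sub_nonneg.2 hp1)]

lemma meanOf_bernMeasure (hp0 : 0 ≤ p) (hp1 : p ≤ 1) : meanOf (bernMeasure p) = p := by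
  simp [meanOf, integral_bernMeasure hp0 hp1]

lemma varOf_bernMeasure (hp0 : 0 ≤ p) (hp1 : p ≤ 1) : varOf (bernMeasure p) = p * (1 - p) := by
  rw [varOf, meanOf_bernMeasure hp0 hp1, integral_bernMeasure hp0 hp1]
  ring

lemma varOf_bernMeasure_pos (hp0 : 0 < p) (hp1 : p < 1) : 0 < varOf (bernMeasure p) := by
  rw [varOf_bernMeasure hp0.le hp1.le]
  exact mul_pos hp0 (sub_pos.2 hp1)

lemma kurtOf_bernMeasure (hp0 : 0 < p) (hp1 : p < 1) :
    kurtOf (bernMeasure p) = p⁻¹ - 2 + p / (1 - p) := by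
  have : 1 - p ≠ 0 := sub_ne_zero.2 hp1.ne'
  rw [kurtOf, varOf_bernMeasure hp0.le hp1.le, meanOf_bernMeasure hp0.le hp1.le,
    integral_bernMeasure hp0.le hp1.le]
  field_simp
  ring

lemma momentRatio_bernMeasure_zero (hp0 : 0 ≤ p) (hp1 : p ≤ 1) :
    momentRatio (bernMeasure p) 0 = p⁻¹ := by
  rw [momentRatio, integral_bernMeasure hp0 hp1, integral_bernMeasure hp0 hp1]
  simp [sq]

lemma two_sub_le_ukurtOf_sub_kurtOf_bernMeasure (hp0 : 0 < p) (hp1 : p < 1) :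
    2 - p / (1 - p) ≤ ukurtOf (bernMeasure p) - kurtOf (bernMeasure p) := by
  have := isProbabilityMeasure_bernMeasure hp0.le hp1.le
  have bdd : BddAbove (Set.range (momentRatio (bernMeasure p))) :=
    ⟨_, Set.forall_mem_range.2 (momentRatio_le_kurtOf_add_two (integrable_bernMeasure _)
      (varOf_bernMeasure_pos hp0 hp1))⟩
  have ratio_le := le_ciSup bdd 0
  rw [momentRatio_bernMeasure_zero hp0.le hp1.le, ← ukurtOf_eq_iSup_momentRatio] at ratio_le
  rw [kurtOf_bernMeasure hp0 hp1]
  linarith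

end Bernoulli

theorem sup_uniform_kurtosis_sub_kurtosis_eq_two :
    IsLUB {d : ℝ | ∃ μ : Measure ℝ, IsProbabilityMeasure μ ∧
        Integrable (fun y => y ^ 4) μ ∧ 0 < varOf μ ∧ d = ukurtOf μ - kurtOf μ} 2 ∧
    ∀ p : ℝ, 0 < p → p < 1 →
      kurtOf (bernMeasure p) = p⁻¹ - 2 + p / (1 - p) ∧
      2 - p / (1 - p) ≤ ukurtOf (bernMeasure p) - kurtOf (bernMeasure p) := by
  refine ⟨⟨?_, fun b hb => ?_⟩, fun p hp0 hp1 =>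
    ⟨kurtOf_bernMeasure hp0 hp1, two_sub_le_ukurtOf_sub_kurtOf_bernMeasure hp0 hp1⟩⟩
  · rintro _ ⟨μ, hμ, h4, hv, rfl⟩
    linarith [ukurtOf_le_kurtOf_add_two h4 hv]
  · have lim : Tendsto (fun p : ℝ => 2 - p / (1 - p)) (𝓝[>] 0) (𝓝 2) := by
      have : ContinuousAt (fun p : ℝ => 2 - p / (1 - p)) 0 := by fun_prop (disch := norm_num)
      simpa using this.tendsto.mono_left nhdsWithin_le_nhds
    refine le_of_tendsto lim ?_
    filter_upwards [Ioo_mem_nhdsGT one_pos] with p ⟨hp0, hp1⟩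
    exact (two_sub_le_ukurtOf_sub_kurtOf_bernMeasure hp0 hp1).trans
      (hb ⟨bernMeasure p, isProbabilityMeasure_bernMeasure hp0.le hp1.le,
        integrable_bernMeasure _, varOf_bernMeasure_pos hp0 hp1, rfl⟩)
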